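/- Let R > 0, m_1, m_2 > 0, let α ∈ (0, R) be a real number, and let c ∈ ℂ with |c| < R and c ≠ α. If the pair of points (c_1, c_2) = (α, c) satisfies the elliptic relative-equilibrium equations with n = 2, then c is a negative real number, and writing r = −c ∈ (0, R) one has m_1 α (R² + α²)(R² − r²)² = m_2 r (R² + r²)(R² − α²)². -/

import Mathlib

open Complex ComplexConjugate Finset

/-- The quantity `Θ_{2,(k,j)}` appearing in the denominators of the equations of
motion of the curved `n`-body problem in the Poincaré disk of radius `R`. -/
noncomputable def diskTheta (R : ℝ) (z w : ℂ) : ℝ :=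
  ((2 * (z * conj w + w * conj z) * (R : ℂ) ^ 2
      - ((((‖z‖) ^ 2 + R ^ 2) * ((‖w‖) ^ 2 + R ^ 2) : ℝ) : ℂ)) ^ 2
    - (((R ^ 2 - (‖z‖) ^ 2) ^ 2 * (R ^ 2 - (‖w‖) ^ 2) ^ 2 : ℝ) : ℂ)).re

/-- The points `c k` satisfy the elliptic relative-equilibrium equations in the
Poincaré disk of radius `R` with masses `m`. -/
def EllipticRelEq (R : ℝ) {n : ℕ} (m : Fin n → ℝ) (c : Fin n → ℂ) : Prop :=
  ∀ k : Fin n,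
    (R : ℂ) ^ 3 * (((R ^ 2 + (‖c k‖) ^ 2 : ℝ)) : ℂ) * c k
        / (((4 * (R ^ 2 - (‖c k‖) ^ 2) ^ 4 : ℝ)) : ℂ)
      = -∑ j ∈ Finset.univ.erase k,
          (m j : ℂ) * ((((‖c j‖) ^ 2 - R ^ 2) ^ 2 : ℝ) : ℂ)
            * (c j - c k) * ((R : ℂ) ^ 2 - c k * conj (c j))
            / (((diskTheta R (c k) (c j)) ^ ((3 : ℝ) / 2) : ℝ) : ℂ)

/-! The function `Θ` factors as `Θ(z, w) = 4R²‖z - w‖²‖R² - z w̄‖²`, so it is positive for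
distinct points of the disk. Multiplying the equation of the body at `α` by the real
denominators, its imaginary part reads `(R² - α²) · Im c = 0`, so `c = x` is real. For two
bodies on the real axis both equations carry the factor `Θ^{3/2} / ((α - x)(R² - α x))`, and
eliminating it gives the mass relation with `r = -x`; its left side is positive, which
forces `x < 0`. -/

theorem diskTheta_eq (R : ℝ) (z w : ℂ) :
    diskTheta R z w = 4 * R ^ 2 * ‖z - w‖ ^ 2 * ‖(R : ℂ) ^ 2 - z * conj w‖ ^ 2 := by
  simp only [diskTheta, Complex.sq_norm, Complex.normSq_apply]
  simp [pow_two, Complex.mul_re, Complex.mul_im]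
  ring

theorem diskTheta_comm (R : ℝ) (z w : ℂ) : diskTheta R z w = diskTheta R w z := by
  unfold diskTheta
  congr 2 <;> push_cast <;> ring

theorem diskTheta_pos {R : ℝ} {z w : ℂ} (hz : ‖z‖ < R) (hw : ‖w‖ < R) (hzw : z ≠ w) :
    0 < diskTheta R z w := by
  have hR : 0 < R := (norm_nonneg z).trans_lt hz
  have hzw' : (R : ℂ) ^ 2 - z * conj w ≠ 0 := by
    refine sub_ne_zero.mpr fun h => ?_
    have : ‖z * conj w‖ < R ^ 2 := by
      rw [norm_mul, Complex.norm_conj, sq]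
      exact mul_lt_mul'' hz hw (norm_nonneg _) (norm_nonneg _)
    rw [← h, norm_pow, Complex.norm_real, Real.norm_of_nonneg hR.le] at this
    exact lt_irrefl _ this
  rw [diskTheta_eq]
  have := sub_ne_zero.mpr hzw
  positivity

theorem ellipticRelEq_fin_two_iff {R m₁ m₂ : ℝ} {z w : ℂ} :
    EllipticRelEq R ![m₁, m₂] ![z, w] ↔
      (R : ℂ) ^ 3 * ((R ^ 2 + ‖z‖ ^ 2 : ℝ) : ℂ) * z / ((4 * (R ^ 2 - ‖z‖ ^ 2) ^ 4 : ℝ) : ℂ)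
          = -((m₂ : ℂ) * (((‖w‖ ^ 2 - R ^ 2) ^ 2 : ℝ) : ℂ) * (w - z) * ((R : ℂ) ^ 2 - z * conj w)
            / ((diskTheta R z w ^ ((3 : ℝ) / 2) : ℝ) : ℂ)) ∧
      (R : ℂ) ^ 3 * ((R ^ 2 + ‖w‖ ^ 2 : ℝ) : ℂ) * w / ((4 * (R ^ 2 - ‖w‖ ^ 2) ^ 4 : ℝ) : ℂ)
          = -((m₁ : ℂ) * (((‖z‖ ^ 2 - R ^ 2) ^ 2 : ℝ) : ℂ) * (z - w) * ((R : ℂ) ^ 2 - w * conj z)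
            / ((diskTheta R w z ^ ((3 : ℝ) / 2) : ℝ) : ℂ)) := by
  have h0 : (univ.erase (0 : Fin 2)) = {1} := by decide
  have h1 : (univ.erase (1 : Fin 2)) = {0} := by decide
  refine ⟨fun h => ⟨by simpa [h0] using h 0, by simpa [h1] using h 1⟩, fun ⟨e0, e1⟩ k => ?_⟩
  fin_cases k
  · simpa [h0] using e0
  · simpa [h1] using e1

theorem im_sub_ofReal_mul_sub_ofReal_mul_conj (R a : ℝ) (c : ℂ) :
    ((c - a) * ((R : ℂ) ^ 2 - a * conj c)).im = (R ^ 2 - a ^ 2) * c.im := by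
  simp [pow_two, Complex.mul_im, Complex.mul_re]
  ring

theorem EllipticRelEq.im_eq_zero {R m₁ m₂ a : ℝ} {c : ℂ} (hm₂ : m₂ ≠ 0) (ha : |a| < R)
    (hc : ‖c‖ < R) (hne : c ≠ a) (h : EllipticRelEq R ![m₁, m₂] ![(a : ℂ), c]) :
    c.im = 0 := by
  have ha' : ‖(a : ℂ)‖ < R := by rwa [Complex.norm_real, Real.norm_eq_abs]
  have hΘ := Real.rpow_pos_of_pos (diskTheta_pos ha' hc hne.symm) ((3 : ℝ) / 2)
  have hK : ‖c‖ ^ 2 - R ^ 2 ≠ 0 := by nlinarith [norm_nonneg c]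
  have hRa : R ^ 2 - a ^ 2 ≠ 0 := by nlinarith [abs_nonneg a, sq_abs a]
  have him := congrArg Complex.im (ellipticRelEq_fin_two_iff.mp h).1
  simp only [Complex.div_ofReal_im, Complex.neg_im, ← Complex.ofReal_mul, mul_assoc,
    Complex.im_ofReal_mul, im_sub_ofReal_mul_sub_ofReal_mul_conj, Complex.im_mul_ofReal] at him
  rw [← Complex.ofReal_pow, Complex.ofReal_im, zero_mul, zero_div, eq_comm, neg_eq_zero,
    div_eq_zero_iff] at him
  simpa [hm₂, hK, hRa, hΘ.ne'] using him

theorem EllipticRelEq.mass_relation_of_real {R m₁ m₂ a x : ℝ} (ha : |a| < R) (hx : |x| < R)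
    (hax : a ≠ x) (h : EllipticRelEq R ![m₁, m₂] ![(a : ℂ), (x : ℂ)]) :
    m₁ * a * (R ^ 2 + a ^ 2) * (R ^ 2 - x ^ 2) ^ 2
      = -(m₂ * x * (R ^ 2 + x ^ 2) * (R ^ 2 - a ^ 2) ^ 2) := by
  obtain ⟨e₀, e₁⟩ := ellipticRelEq_fin_two_iff.mp h
  simp only [Complex.norm_real, Real.norm_eq_abs, sq_abs, Complex.conj_ofReal,
    diskTheta_comm R x] at e₀ e₁
  set t := diskTheta R a x ^ ((3 : ℝ) / 2)
  have ht : 0 < t := Real.rpow_pos_of_pos (diskTheta_pos (by simpa) (by simpa)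
    (by exact_mod_cast hax)) _
  have hRa : 0 < R ^ 2 - a ^ 2 := by nlinarith [abs_nonneg a, sq_abs a]
  have hRx : 0 < R ^ 2 - x ^ 2 := by nlinarith [abs_nonneg x, sq_abs x]
  have hRax : 0 < R ^ 2 - a * x := by
    have : |a * x| < R ^ 2 := by
      rw [abs_mul, sq]
      exact mul_lt_mul'' ha hx (abs_nonneg a) (abs_nonneg x)
    linarith [le_abs_self (a * x)]
  have e₀' : R ^ 3 * (R ^ 2 + a ^ 2) * a * t
      = -(m₂ * (x ^ 2 - R ^ 2) ^ 2 * (x - a) * (R ^ 2 - a * x)) * (4 * (R ^ 2 - a ^ 2) ^ 4) := by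
    rw [← div_eq_div_iff (by positivity) ht.ne', neg_div]
    exact_mod_cast e₀
  have e₁' : R ^ 3 * (R ^ 2 + x ^ 2) * x * t
      = -(m₁ * (a ^ 2 - R ^ 2) ^ 2 * (a - x) * (R ^ 2 - x * a)) * (4 * (R ^ 2 - x ^ 2) ^ 4) := by
    rw [← div_eq_div_iff (by positivity) ht.ne', neg_div]
    exact_mod_cast e₁
  have hF : 4 * (x - a) * (R ^ 2 - a * x) * (R ^ 2 - a ^ 2) ^ 2 * (R ^ 2 - x ^ 2) ^ 2 ≠ 0 := by
    have := sub_ne_zero.mpr hax.symm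
    positivity
  refine mul_left_cancel₀ hF ?_
  linear_combination x * (R ^ 2 + x ^ 2) * e₀' - a * (R ^ 2 + a ^ 2) * e₁'

theorem ellipticRelEq_two_bodies_general (R m₁ m₂ α : ℝ) (hm₁ : 0 < m₁) (hm₂ : 0 < m₂)
    (hα : α ∈ Set.Ioo 0 R) (c : ℂ) (hc : ‖c‖ < R) (hne : c ≠ (α : ℂ))
    (h : EllipticRelEq R ![m₁, m₂] ![(α : ℂ), c]) :
    ∃ r : ℝ, 0 < r ∧ r < R ∧ c = -(r : ℂ) ∧
      m₁ * α * (R ^ 2 + α ^ 2) * (R ^ 2 - r ^ 2) ^ 2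
        = m₂ * r * (R ^ 2 + r ^ 2) * (R ^ 2 - α ^ 2) ^ 2 := by
  obtain ⟨hα₀, hαR⟩ := hα
  have hα' : |α| < R := by rwa [abs_of_pos hα₀]
  obtain ⟨x, rfl⟩ : ∃ x : ℝ, c = x :=
    ⟨c.re, Complex.ext rfl (by simp [h.im_eq_zero hm₂.ne' hα' hc hne])⟩
  have hx : |x| < R := by simpa using hc
  have hrel := h.mass_relation_of_real hα' hx fun e => hne (by rw [e])
  have hRx : 0 < R ^ 2 - x ^ 2 := by nlinarith [abs_nonneg x, sq_abs x]
  have hx_neg : 0 < -x := by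
    have : m₂ * (R ^ 2 + x ^ 2) * (R ^ 2 - α ^ 2) ^ 2 * -x
        = m₁ * α * (R ^ 2 + α ^ 2) * (R ^ 2 - x ^ 2) ^ 2 := by linear_combination -hrel
    have hpos : 0 < m₂ * (R ^ 2 + x ^ 2) * (R ^ 2 - α ^ 2) ^ 2 * -x := by
      rw [this]
      positivity
    exact pos_of_mul_pos_right hpos (by positivity)
  refine ⟨-x, hx_neg, by linarith [neg_abs_le x], by push_cast; ring, by linear_combination hrel⟩

/-- In an elliptic relative equilibrium of the curved 2-body problem in the Poincaré
disk with the first body on the positive real axis at `α`, the second body is a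
negative real number `−r` with `m₁ α (R² + α²)(R² − r²)² = m₂ r (R² + r²)(R² − α²)²`. -/
theorem ellipticRelEq_two_bodies (R m₁ m₂ α : ℝ) (hR : 0 < R) (hm₁ : 0 < m₁) (hm₂ : 0 < m₂)
    (hα : α ∈ Set.Ioo 0 R) (c : ℂ) (hc : ‖c‖ < R) (hne : c ≠ (α : ℂ))
    (h : EllipticRelEq R ![m₁, m₂] ![(α : ℂ), c]) :
    ∃ r : ℝ, 0 < r ∧ r < R ∧ c = -(r : ℂ) ∧
      m₁ * α * (R ^ 2 + α ^ 2) * (R ^ 2 - r ^ 2) ^ 2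
        = m₂ * r * (R ^ 2 + r ^ 2) * (R ^ 2 - α ^ 2) ^ 2 :=
  ellipticRelEq_two_bodies_general R m₁ m₂ α hm₁ hm₂ hα c hc hne h
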